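/- arXiv:1910.06752 — 4 statements merged into one kernel-verified Lean document; each statement's English description precedes it below -/
import Mathlib

section
/- Let q = p^e be a prime power with e even, and let A ⊆ F_q^2 with 1 < |A| ≤ q. Then either A is contained in a line, or A spans strictly more than |A|/√q directions. -/
/-!
Fix `P ∈ A` and let `N` be the number of directions. The points of `A \ {P}` seen from `P` in a
given direction `d` lie on one line `ℓ`; as `A` is not collinear, some `Q ∈ A` lies off `ℓ`, and
projecting from `Q` maps them injectively into the `N - 1` directions other than `d`. Hence
`|A| - 1 ≤ N (N - 1)`, so `|A| < N²`, and `|A| / √q ≤ √|A| < N` because `|A| ≤ q`.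
-/

/-- The set of directions determined by a set `A ⊆ F²`, as a subset of `F ∪ {∞}`
(modelled as `Option F`, with `none` playing the role of `∞`). -/
def directions {F : Type*} [Field F] (A : Set (F × F)) : Set (Option F) :=
  {d | ∃ P ∈ A, ∃ Q ∈ A, P ≠ Q ∧
    ((Q.1 = P.1 ∧ d = none) ∨ (Q.1 ≠ P.1 ∧ d = some ((Q.2 - P.2) / (Q.1 - P.1))))}

section

open Finset
open scoped Classical

variable {F : Type*} [Field F] {A : Set (F × F)} {s : Finset (F × F)} {P Q X Y : F × F}

noncomputable def dir (P Q : F × F) : Option F :=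
  if Q.1 = P.1 then none else some ((Q.2 - P.2) / (Q.1 - P.1))

def cross (P Q R : F × F) : F :=
  (Q.1 - P.1) * (R.2 - P.2) - (Q.2 - P.2) * (R.1 - P.1)

theorem cross_rotate (P Q R : F × F) : cross Q R P = cross P Q R := by
  unfold cross; ring

theorem cross_swap (P Q R : F × F) : cross P R Q = -cross P Q R := by
  unfold cross; ring

theorem dir_comm (P Q : F × F) : dir P Q = dir Q P := by
  unfold dir
  by_cases h : Q.1 = P.1
  · simp [h]
  · rw [if_neg h, if_neg (Ne.symm h), Option.some_inj, ← neg_sub Q.2, ← neg_sub Q.1, neg_div_neg_eq]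

theorem dir_mem_directions (hP : P ∈ A) (hQ : Q ∈ A) (hPQ : P ≠ Q) : dir P Q ∈ directions A := by
  refine ⟨P, hP, Q, hQ, hPQ, ?_⟩
  by_cases h : Q.1 = P.1 <;> simp [dir, h]

theorem directions_finite (hA : A.Finite) : (directions A).Finite := by
  refine ((hA.prod hA).image fun x => dir x.1 x.2).subset ?_
  rintro d ⟨P, hP, Q, hQ, -, h⟩
  refine ⟨(P, Q), ⟨hP, hQ⟩, ?_⟩
  rcases h with ⟨h, rfl⟩ | ⟨h, rfl⟩ <;> simp [dir, h]

theorem dir_eq_dir_iff (hX : X ≠ P) (hY : Y ≠ P) : dir P X = dir P Y ↔ cross P X Y = 0 := by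
  have hX' : X.1 = P.1 → X.2 - P.2 ≠ 0 := fun h₁ h₂ => hX (Prod.ext h₁ (sub_eq_zero.mp h₂))
  have hY' : Y.1 = P.1 → Y.2 - P.2 ≠ 0 := fun h₁ h₂ => hY (Prod.ext h₁ (sub_eq_zero.mp h₂))
  unfold dir cross
  by_cases h₁ : X.1 = P.1 <;> by_cases h₂ : Y.1 = P.1
  · simp [h₁, h₂]
  · simp [h₁, h₂, sub_eq_zero, hX' h₁]
  · simp [h₁, h₂, sub_eq_zero, hY' h₂]
  · rw [if_neg h₁, if_neg h₂, Option.some_inj, div_eq_div_iff (sub_ne_zero.mpr h₁)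
      (sub_ne_zero.mpr h₂), sub_eq_zero, eq_comm, mul_comm (X.1 - P.1)]

theorem cross_eq_zero_of_mem_line (hXY : X ≠ Y) (hP : cross P X Y = 0) (hQ : cross Q X Y = 0) :
    cross X P Q = 0 := by
  unfold cross at *
  by_cases h : X.1 = Y.1
  · have hY : Y.2 - X.2 ≠ 0 := sub_ne_zero.mpr fun h' => hXY (Prod.ext h h'.symm)
    apply mul_left_cancel₀ hY
    linear_combination (P.2 - X.2) * hQ - (Q.2 - X.2) * hP
  · have hY : Y.1 - X.1 ≠ 0 := sub_ne_zero.mpr (Ne.symm h)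
    apply mul_left_cancel₀ hY
    linear_combination (P.1 - X.1) * hQ - (Q.1 - X.1) * hP

theorem collinear_of_cross_eq_zero (hPQ : P ≠ Q) (h : ∀ X ∈ A, cross P Q X = 0) :
    Collinear F A := by
  rw [collinear_iff_exists_forall_eq_smul_vadd]
  refine ⟨P, Q - P, fun X hX => ?_⟩
  have hX := h X hX
  unfold cross at hX
  by_cases h₁ : Q.1 = P.1
  · have h₂ : Q.2 - P.2 ≠ 0 := sub_ne_zero.mpr fun h' => hPQ (Prod.ext h₁ h').symm
    have hX₁ : X.1 = P.1 := by simpa [h₁, h₂, sub_eq_zero] using hX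
    refine ⟨(X.2 - P.2) / (Q.2 - P.2), Prod.ext (by simp [hX₁, h₁]) ?_⟩
    simp only [Prod.smul_snd, Prod.snd_sub, vadd_eq_add, Prod.snd_add, smul_eq_mul]
    field_simp
    ring
  · have h₂ : Q.1 - P.1 ≠ 0 := sub_ne_zero.mpr h₁
    refine ⟨(X.1 - P.1) / (Q.1 - P.1), Prod.ext ?_ ?_⟩ <;>
      simp only [Prod.smul_fst, Prod.smul_snd, Prod.fst_sub, Prod.snd_sub, vadd_eq_add,
        Prod.fst_add, Prod.snd_add, smul_eq_mul] <;>
      field_simp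
    · ring
    · linear_combination hX

theorem exists_dir_ne_of_not_collinear (hA : ¬Collinear F A) (hXP : X ≠ P) :
    ∃ Q ∈ A, Q ≠ P ∧ dir P Q ≠ dir P X := by
  by_contra! h
  refine hA (collinear_of_cross_eq_zero hXP.symm fun Y hY => ?_)
  by_cases hYP : Y = P
  · simp [hYP, cross]
  · exact (dir_eq_dir_iff hXP hYP).1 (h Y hY hYP).symm

theorem dir_ne_of_dir_ne (hQP : Q ≠ P) (hXP : X ≠ P) (hQ : dir P Q ≠ dir P X) :
    dir Q X ≠ dir P X := by
  intro h
  have hXQ : X ≠ Q := by rintro rfl; exact hQ rfl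
  have hX : cross X Q P = 0 :=
    (dir_eq_dir_iff hXQ.symm hXP.symm).1 (by rw [dir_comm X, h, dir_comm])
  exact hQ ((dir_eq_dir_iff hQP hXP).2 (by rw [cross_swap, ← cross_rotate, hX, neg_zero]))

theorem eq_of_dir_eq_dir (hQP : Q ≠ P) (hXP : X ≠ P) (hYP : Y ≠ P) (hQ : dir P Q ≠ dir P X)
    (hPXY : dir P X = dir P Y) (hQXY : dir Q X = dir Q Y) : X = Y := by
  by_contra hXY
  have hXQ : X ≠ Q := by rintro rfl; exact hQ rfl
  have hYQ : Y ≠ Q := by rintro rfl; exact hQ hPXY.symm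
  have hPQX := cross_eq_zero_of_mem_line hXY ((dir_eq_dir_iff hXP hYP).1 hPXY)
    ((dir_eq_dir_iff hXQ hYQ).1 hQXY)
  exact hQ ((dir_eq_dir_iff hQP hXP).2 (by rw [cross_rotate]; exact hPQX))

theorem card_filter_dir_le (hs : ¬Collinear F (s : Set (F × F))) (hP : P ∈ s) (d : Option F) :
    #{X ∈ s.erase P | dir P X = d} ≤ (directions (s : Set (F × F))).ncard - 1 := by
  obtain h | ⟨X₀, hX₀⟩ := eq_empty_or_nonempty {X ∈ s.erase P | dir P X = d}
  · simp [h]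
  simp only [mem_filter, mem_erase] at hX₀
  obtain ⟨⟨hX₀P, hX₀s⟩, rfl⟩ := hX₀
  obtain ⟨Q, hQs, hQP, hQ⟩ := exists_dir_ne_of_not_collinear hs hX₀P
  have hD := directions_finite s.finite_toSet
  rw [Set.ncard_eq_toFinset_card _ hD, ← card_erase_of_mem
    (hD.mem_toFinset.2 (dir_mem_directions hP hX₀s hX₀P.symm))]
  refine card_le_card_of_injOn (dir Q) (fun X hX => ?_) fun X hX Y hY hXY => ?_
  · simp only [coe_filter, mem_erase] at hX
    obtain ⟨⟨hXP, hXs⟩, hX⟩ := hX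
    rw [← hX] at hQ ⊢
    have hXQ : X ≠ Q := by rintro rfl; exact hQ rfl
    simpa using ⟨dir_mem_directions hQs hXs hXQ.symm, dir_ne_of_dir_ne hQP hXP hQ⟩
  · simp only [coe_filter, mem_erase] at hX hY
    exact eq_of_dir_eq_dir hQP hX.1.1 hY.1.1 (hX.2 ▸ hQ) (hX.2.trans hY.2.symm) hXY

theorem card_sub_one_le_mul_ncard_directions (hs : ¬Collinear F (s : Set (F × F))) (hP : P ∈ s) :
    #s - 1 ≤ ((directions (s : Set (F × F))).ncard - 1) * (directions (s : Set (F × F))).ncard := by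
  have hD := directions_finite s.finite_toSet
  have h := card_le_mul_card_image_of_maps_to (f := dir P) (t := hD.toFinset)
    (fun X hX => hD.mem_toFinset.2 <| dir_mem_directions hP (mem_of_mem_erase hX)
      (ne_of_mem_erase hX).symm) _ fun d _ => card_filter_dir_le hs hP d
  rwa [card_erase_of_mem hP, ← Set.ncard_eq_toFinset_card _ hD] at h

theorem ncard_lt_sq_ncard_directions (hA : ¬Collinear F A) (h1 : 1 < A.ncard) :
    A.ncard < (directions A).ncard ^ 2 := by
  lift A to Finset (F × F) using Set.finite_of_ncard_pos (zero_lt_one.trans h1)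
  obtain ⟨P, hP⟩ : A.Nonempty := by rw [← card_pos, ← Set.ncard_coe_finset]; omega
  have h := card_sub_one_le_mul_ncard_directions hA hP
  rw [Set.ncard_coe_finset] at h1 ⊢
  generalize (directions (A : Set (F × F))).ncard = N at h ⊢
  rcases N with _ | N
  · omega
  · rw [Nat.add_sub_cancel] at h
    have hN : 0 < N := Nat.pos_of_ne_zero (by rintro rfl; omega)
    nlinarith [Nat.sub_add_cancel h1.le]

end

theorem div_sqrt_lt_of_lt_sq {n N q : ℕ} (hN : n < N ^ 2) (hq : n ≤ q) : (n : ℝ) / √q < N := by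
  have hN₀ : (0 : ℝ) < N := by exact_mod_cast Nat.pos_of_ne_zero (by rintro rfl; omega)
  calc (n : ℝ) / √q ≤ √n := div_le_of_le_mul₀ (Real.sqrt_nonneg _) (Real.sqrt_nonneg _) <|
        (Real.mul_self_sqrt n.cast_nonneg).symm.le.trans (by gcongr)
    _ < N := (Real.sqrt_lt' hN₀).2 (by exact_mod_cast hN)

theorem directions_even_general (q : ℕ) {F : Type*} [Field F]
    (A : Set (F × F)) (h1 : 1 < A.ncard) (h2 : A.ncard ≤ q) :
    Collinear F A ∨
      ((directions A).ncard : ℝ) > (A.ncard : ℝ) / Real.sqrt q :=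
  or_iff_not_imp_left.2 fun hA => div_sqrt_lt_of_lt_sq (ncard_lt_sq_ncard_directions hA h1) h2

/-- For `q = p^e` with `e` even, a set `A ⊆ 𝔽_q²` with `1 < |A| ≤ q` is either
contained in a line or spans more than `|A|/√q` directions. -/
theorem directions_even (p e q : ℕ) (hp : p.Prime) (hepos : 0 < e) (he : Even e)
    (hq : q = p ^ e) {F : Type*} [Field F] [Fintype F] (hF : Fintype.card F = q)
    (A : Set (F × F)) (h1 : 1 < A.ncard) (h2 : A.ncard ≤ q) :
    Collinear F A ∨
      ((directions A).ncard : ℝ) > (A.ncard : ℝ) / Real.sqrt q :=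
  directions_even_general q A h1 h2
end

section
/- Let q be a prime power, let P be a set of points in F_q^2 and let L be a set of (affine) lines in F_q^2. Let I(P, L) be the set of incident pairs, i.e. pairs (p, l) ∈ P × L with p ∈ l. Then | |I(P,L)| - |P||L|/q | ≤ √(q·|P|·|L|). -/
/-- An affine line in the plane `F²`. -/
def IsAffLine {F : Type*} [Field F] (L : Set (F × F)) : Prop :=
  ∃ x v : F × F, v ≠ 0 ∧ L = {y | ∃ t : F, y = x + t • v}

lemma affLine_ncard {F : Type*} [Field F] [Fintype F] {l : Set (F × F)}
    (h : IsAffLine l) : l.ncard = Fintype.card F := by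
  obtain ⟨x, v, hv, rfl⟩ := h
  have hinj : Function.Injective (fun t : F => x + t • v) := by
    intro s t hst
    simp only [add_right_inj] at hst
    by_contra hne
    have h0 : (s - t) • v = 0 := by rw [sub_smul, hst, sub_self]
    have : v = 0 := by
      have := congrArg (fun w => (s - t)⁻¹ • w) h0
      simpa [smul_smul, inv_mul_cancel₀ (sub_ne_zero.mpr hne)] using this
    exact hv this
  have : {y | ∃ t : F, y = x + t • v} = Set.range (fun t : F => x + t • v) := by
    ext y; simp [Set.range, eq_comm]
  rw [this, ← Set.image_univ, Set.ncard_image_of_injective _ hinj, Set.ncard_univ,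
    Nat.card_eq_fintype_card]

lemma affLine_eq_through {F : Type*} [Field F] {l : Set (F × F)} (h : IsAffLine l)
    {a b : F × F} (ha : a ∈ l) (hb : b ∈ l) (hab : a ≠ b) :
    l = {y | ∃ t : F, y = a + t • (b - a)} := by
  obtain ⟨x, v, hv, rfl⟩ := h
  obtain ⟨s, rfl⟩ := ha
  obtain ⟨u, rfl⟩ := hb
  have hus : u - s ≠ 0 := by
    intro h0
    exact hab (by rw [sub_eq_zero] at h0; rw [h0])
  have hba : (x + u • v) - (x + s • v) = (u - s) • v := by
    rw [sub_smul]; abel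
  ext y
  constructor
  · rintro ⟨t, rfl⟩
    refine ⟨(t - s) / (u - s), ?_⟩
    rw [hba, smul_smul, div_mul_cancel₀ _ hus, sub_smul]
    abel
  · rintro ⟨t, rfl⟩
    refine ⟨s + t * (u - s), ?_⟩
    rw [hba, smul_smul, add_smul, mul_smul]
    abel

lemma affLine_inter_subsingleton {F : Type*} [Field F] {l₁ l₂ : Set (F × F)}
    (h₁ : IsAffLine l₁) (h₂ : IsAffLine l₂) (hne : l₁ ≠ l₂) :
    (l₁ ∩ l₂).Subsingleton := by
  intro a ha b hb
  by_contra hab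
  exact hne ((affLine_eq_through h₁ ha.1 hb.1 hab).trans
    (affLine_eq_through h₂ ha.2 hb.2 hab).symm)

/-- Vinh's point–line incidence bound in `𝔽_q²`: for a set `P` of points and a set
`L` of affine lines, `| |I(P,L)| - |P||L|/q | ≤ √(q·|P|·|L|)`. -/
theorem vinh_incidence (p e q : ℕ) (hp : p.Prime) (he : 0 < e) (hq : q = p ^ e)
    {F : Type*} [Field F] [Fintype F] (hF : Fintype.card F = q)
    (P : Set (F × F)) (L : Set (Set (F × F))) (hL : ∀ l ∈ L, IsAffLine l) :
    |(({x : (F × F) × Set (F × F) | x.1 ∈ P ∧ x.2 ∈ L ∧ x.1 ∈ x.2}.ncard : ℝ)) -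
        (P.ncard : ℝ) * (L.ncard : ℝ) / q| ≤
      Real.sqrt ((q : ℝ) * P.ncard * L.ncard) := by
  classical
  have hq0 : 0 < q := hq ▸ pow_pos hp.pos e
  have hQ0 : (0:ℝ) < (q:ℝ) := by exact_mod_cast hq0
  have hPfin : P.Finite := Set.toFinite P
  have hLfin : L.Finite := Set.toFinite L
  set PF : Finset (F × F) := hPfin.toFinset with hPF
  set LF : Finset (Set (F × F)) := hLfin.toFinset with hLF
  have hLmem : ∀ l ∈ LF, IsAffLine l := fun l hl => hL l (hLfin.mem_toFinset.mp hl)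
  set n : F × F → ℝ := fun x => ∑ l ∈ LF, if x ∈ l then (1:ℝ) else 0 with hn
  set Q : ℝ := (q : ℝ) with hQdef
  set Lr : ℝ := (LF.card : ℝ) with hLr
  set c : ℝ := Lr / Q with hc
  -- each line has exactly q points
  have hline_card : ∀ l ∈ LF, ((Finset.univ.filter (fun x : F × F => x ∈ l)).card : ℝ) = Q := by
    intro l hl
    have h1 : Finset.univ.filter (fun x : F × F => x ∈ l) = l.toFinset := by
      ext x; simp
    rw [h1, ← Set.ncard_eq_toFinset_card', affLine_ncard (hLmem l hl), hF]
  -- S1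
  have hS1 : ∑ x : F × F, n x = Q * Lr := by
    rw [hn]
    rw [Finset.sum_comm]
    simp only [Finset.sum_boole]
    rw [Finset.sum_congr rfl hline_card, Finset.sum_const, nsmul_eq_mul, mul_comm]
  -- S2
  have hS2 : ∑ x : F × F, (n x) ^ 2 ≤ Lr * Q + Lr ^ 2 := by
    have hsq : ∀ x : F × F, (n x) ^ 2 =
        ∑ l ∈ LF, ∑ l' ∈ LF, (if x ∈ l ∩ l' then (1:ℝ) else 0) := by
      intro x
      rw [hn, sq, Finset.sum_mul_sum]
      refine Finset.sum_congr rfl fun l _ => Finset.sum_congr rfl fun l' _ => ?_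
      by_cases h1 : x ∈ l <;> by_cases h2 : x ∈ l' <;> simp [h1, h2, Set.mem_inter_iff]
    calc ∑ x : F × F, (n x) ^ 2
        = ∑ l ∈ LF, ∑ l' ∈ LF, (((l ∩ l').ncard : ℝ)) := by
          simp_rw [hsq]
          rw [Finset.sum_comm]
          refine Finset.sum_congr rfl fun l hl => ?_
          rw [Finset.sum_comm]
          refine Finset.sum_congr rfl fun l' hl' => ?_
          rw [Finset.sum_boole]
          congr 1
          have h1 : Finset.univ.filter (fun x : F × F => x ∈ l ∩ l') = (l ∩ l').toFinset := by
            ext x; simp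
          rw [h1, ← Set.ncard_eq_toFinset_card']
      _ ≤ ∑ l ∈ LF, ∑ l' ∈ LF, ((if l = l' then Q else 0) + 1) := by
          refine Finset.sum_le_sum fun l hl => Finset.sum_le_sum fun l' hl' => ?_
          by_cases hll : l = l'
          · subst hll
            simp only [Set.inter_self, eq_self_iff_true, if_true]
            rw [affLine_ncard (hLmem l hl), hF, hQdef]
            linarith
          · simp only [if_neg hll, zero_add]
            have := (Set.ncard_le_one (Set.toFinite _)).mpr
              (affLine_inter_subsingleton (hLmem l hl) (hLmem l' hl') hll)
            exact_mod_cast this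
      _ = Lr * Q + Lr ^ 2 := by
          have h1 : ∀ l ∈ LF, ∑ l' ∈ LF, ((if l = l' then Q else 0) + 1) = Q + Lr := by
            intro l hl
            rw [Finset.sum_add_distrib, Finset.sum_const, nsmul_eq_mul, mul_one]
            have h2 : (∑ l' ∈ LF, if l = l' then Q else 0) = Q := by
              rw [Finset.sum_ite_eq, if_pos hl]
            rw [h2, hLr]
          rw [Finset.sum_congr rfl h1, Finset.sum_const, nsmul_eq_mul]
          ring
  -- variance bound
  have hcard2 : (Fintype.card (F × F) : ℝ) = Q ^ 2 := by
    rw [Fintype.card_prod, hF, hQdef]; push_cast; ring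
  have hvar : ∑ x : F × F, (n x - c) ^ 2 ≤ Q * Lr := by
    have hexp : ∑ x : F × F, (n x - c) ^ 2
        = (∑ x : F × F, (n x) ^ 2) - 2 * c * (∑ x : F × F, n x)
          + (Fintype.card (F × F) : ℝ) * c ^ 2 := by
      simp_rw [sub_sq]
      rw [Finset.sum_add_distrib, Finset.sum_sub_distrib, Finset.sum_const, Finset.card_univ,
        nsmul_eq_mul]
      have hm : ∑ x : F × F, 2 * n x * c = 2 * c * ∑ x : F × F, n x := by
        rw [Finset.mul_sum]; exact Finset.sum_congr rfl fun x _ => by ring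
      rw [hm]
    rw [hexp, hS1, hcard2, hc]
    have hQne : Q ≠ 0 := ne_of_gt hQ0
    have e1 : Q ^ 2 * (Lr / Q) ^ 2 = Lr ^ 2 := by field_simp
    have e2 : 2 * (Lr / Q) * (Q * Lr) = 2 * Lr ^ 2 := by field_simp
    rw [e1, e2]
    linarith [hS2]
  -- incidence count
  have hIcount : (({x : (F × F) × Set (F × F) | x.1 ∈ P ∧ x.2 ∈ L ∧ x.1 ∈ x.2}.ncard : ℝ))
      = ∑ p ∈ PF, n p := by
    have hset : {x : (F × F) × Set (F × F) | x.1 ∈ P ∧ x.2 ∈ L ∧ x.1 ∈ x.2}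
        = ↑((PF ×ˢ LF).filter (fun x => x.1 ∈ x.2)) := by
      ext x
      simp only [Set.mem_setOf_eq, Finset.coe_filter, Finset.mem_product, hPF, hLF,
        Set.Finite.mem_toFinset]
      tauto
    rw [hset, Set.ncard_coe_finset, ← Finset.sum_boole, Finset.sum_product]
  have hPcard : (P.ncard : ℝ) = (PF.card : ℝ) := by
    rw [hPF, Set.ncard_eq_toFinset_card]
  have hLcard : (L.ncard : ℝ) = Lr := by
    rw [hLr, hLF, Set.ncard_eq_toFinset_card]
  have hsum : (({x : (F × F) × Set (F × F) | x.1 ∈ P ∧ x.2 ∈ L ∧ x.1 ∈ x.2}.ncard : ℝ))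
      - (P.ncard : ℝ) * (L.ncard : ℝ) / q = ∑ p ∈ PF, (n p - c) := by
    rw [Finset.sum_sub_distrib, Finset.sum_const, nsmul_eq_mul, hIcount, hPcard, hLcard, hc,
      hQdef]
    ring
  rw [hsum]
  have hCS : (∑ p ∈ PF, (n p - c)) ^ 2 ≤ (PF.card : ℝ) * ∑ p ∈ PF, (n p - c) ^ 2 :=
    sq_sum_le_card_mul_sum_sq
  have hext : ∑ p ∈ PF, (n p - c) ^ 2 ≤ ∑ x : F × F, (n x - c) ^ 2 :=
    Finset.sum_le_sum_of_subset_of_nonneg (Finset.subset_univ _) (fun x _ _ => sq_nonneg _)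
  have hfinal : (∑ p ∈ PF, (n p - c)) ^ 2 ≤ (q : ℝ) * P.ncard * L.ncard := by
    calc (∑ p ∈ PF, (n p - c)) ^ 2 ≤ (PF.card : ℝ) * ∑ p ∈ PF, (n p - c) ^ 2 := hCS
      _ ≤ (PF.card : ℝ) * (Q * Lr) :=
          mul_le_mul_of_nonneg_left (hext.trans hvar) (by positivity)
      _ = (q : ℝ) * P.ncard * L.ncard := by rw [hPcard, hLcard, hQdef]; ring
  calc |∑ p ∈ PF, (n p - c)|
      = Real.sqrt ((∑ p ∈ PF, (n p - c)) ^ 2) := (Real.sqrt_sq_eq_abs _).symm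
    _ ≤ Real.sqrt ((q : ℝ) * P.ncard * L.ncard) := Real.sqrt_le_sqrt hfinal
end

section
/- Let q be a prime power, let A ⊆ Aff(F_q) with A = A^{-1}, let k ≥ 1, and let g ∈ A^k with g ≠ Id. Then |π(A)| · |φ_g(A)| ≤ |A^{k+3}|, i.e. |π(A)| ≤ |A^{k+3}| / |φ_g(A)|. -/
open scoped Pointwise

/- We model `Aff(𝔽_q)` as the group of affine self-equivalences `F ≃ᵃ[F] F` of the
line; the element `(a b; 0 1)`, i.e. `x ↦ a·x + b`, has `a = g.linear 1` and
`b = g 0`, and multiplication is composition, `(g * h) x = g (h x)`. The projection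
`π` onto the first component is `g ↦ g.linear 1`. -/

/-- If `A = A⁻¹ ⊆ Aff(𝔽_q)` and `g ∈ A^k`, `g ≠ Id`, then
`|π(A)| · |φ_g(A)| ≤ |A^(k+3)|`, where `φ_g(h) = h·g·h⁻¹`. -/
theorem pi_mul_conj_le (p e q : ℕ) (hp : p.Prime) (he : 0 < e) (hq : q = p ^ e)
    {F : Type*} [Field F] [Fintype F] (hF : Fintype.card F = q)
    (A : Set (F ≃ᵃ[F] F)) (hinv : A⁻¹ = A) (k : ℕ) (hk : 1 ≤ k)
    (g : F ≃ᵃ[F] F) (hgA : g ∈ A ^ k) (hg : g ≠ 1) :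
    ((fun h : F ≃ᵃ[F] F => h.linear 1) '' A).ncard *
        ((fun h : F ≃ᵃ[F] F => h * g * h⁻¹) '' A).ncard ≤
      (A ^ (k + 3)).ncard := by
  classical
  -- the affine group is finite
  have hfin : Finite (F ≃ᵃ[F] F) :=
    Finite.of_injective (fun h : F ≃ᵃ[F] F => (h : F ≃ F))
      (fun a b hab => AffineEquiv.toEquiv_injective hab)
  set π : (F ≃ᵃ[F] F) → F := fun h => h.linear 1 with hπ
  have key : ∀ (L : F ≃ₗ[F] F) (c : F), L c = c * L 1 := fun L c => by
    rw [← smul_eq_mul, ← map_smul, smul_eq_mul, mul_one]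
  have πmul : ∀ h₁ h₂ : F ≃ᵃ[F] F, π (h₁ * h₂) = π h₁ * π h₂ := by
    intro h₁ h₂
    have : (h₁ * h₂).linear = h₁.linear * h₂.linear := rfl
    show (h₁ * h₂).linear 1 = _
    rw [this]
    show h₁.linear (h₂.linear 1) = _
    rw [key h₁.linear, mul_comm]
  have πne : ∀ h : F ≃ᵃ[F] F, π h ≠ 0 := by
    intro h hzero
    have : h.linear 1 = h.linear 0 := by rw [map_zero]; exact hzero
    exact one_ne_zero (h.linear.injective this)
  set B := π '' A with hB
  set C := (fun h : F ≃ᵃ[F] F => h * g * h⁻¹) '' A with hC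
  -- choose a preimage for each element of B
  have hchoose : ∀ b : B, ∃ a : F ≃ᵃ[F] F, a ∈ A ∧ π a = (b : F) := by
    rintro ⟨b, hb⟩
    obtain ⟨a, ha, rfl⟩ := hb
    exact ⟨a, ha, rfl⟩
  choose sec hsecA hsecπ using hchoose
  -- the map
  have hpow : (A : Set (F ≃ᵃ[F] F)) ^ (k + 3) = (A * A) * A ^ k * A := by
    rw [show k + 3 = 2 + k + 1 by ring, pow_add, pow_add, pow_one, sq]
  have hmem : ∀ (b : B) (c : C), sec b * (c : F ≃ᵃ[F] F) ∈ A ^ (k + 3) := by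
    rintro b ⟨c, hc⟩
    obtain ⟨h, hh, rfl⟩ := hc
    rw [hpow]
    have : sec b * (h * g * h⁻¹) = sec b * h * g * h⁻¹ := by group
    rw [this]
    exact Set.mul_mem_mul (Set.mul_mem_mul (Set.mul_mem_mul (hsecA b) hh) hgA)
      (by rw [← hinv]; exact Set.inv_mem_inv.mpr hh)
  set f : B × C → (A ^ (k + 3) : Set (F ≃ᵃ[F] F)) :=
    fun bc => ⟨sec bc.1 * (bc.2 : F ≃ᵃ[F] F), hmem bc.1 bc.2⟩ with hf
  -- conjugates of g have π = π g
  have πC : ∀ c : C, π (c : F ≃ᵃ[F] F) = π g := by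
    rintro ⟨c, hc⟩
    obtain ⟨h, hh, rfl⟩ := hc
    simp only
    have hone : π (1 : F ≃ᵃ[F] F) = 1 := rfl
    have hinv1 : π h⁻¹ = (π h)⁻¹ := by
      have h1 := πmul h⁻¹ h
      rw [inv_mul_cancel, hone] at h1
      exact eq_inv_of_mul_eq_one_left h1.symm
    rw [πmul, πmul, hinv1, mul_comm (π h) (π g), mul_assoc,
      mul_inv_cancel₀ (πne h), mul_one]
  have hinj : Function.Injective f := by
    rintro ⟨b₁, c₁⟩ ⟨b₂, c₂⟩ hfeq
    have heq : sec b₁ * (c₁ : F ≃ᵃ[F] F) = sec b₂ * (c₂ : F ≃ᵃ[F] F) :=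
      congrArg Subtype.val hfeq
    have hπeq : (b₁ : F) * π g = (b₂ : F) * π g := by
      have := congrArg π heq
      rwa [πmul, πmul, hsecπ, hsecπ, πC, πC] at this
    have hb : b₁ = b₂ := Subtype.ext (mul_right_cancel₀ (πne g) hπeq)
    subst hb
    have hc : (c₁ : F ≃ᵃ[F] F) = (c₂ : F ≃ᵃ[F] F) := by
      exact mul_left_cancel heq
    exact Prod.ext rfl (Subtype.ext hc)
  calc B.ncard * C.ncard = Nat.card B * Nat.card C := by
        rw [Nat.card_coe_set_eq, Nat.card_coe_set_eq]
    _ = Nat.card (B × C) := (Nat.card_prod _ _).symm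
    _ ≤ Nat.card (A ^ (k + 3) : Set (F ≃ᵃ[F] F)) := Nat.card_le_card_of_injective f hinj
    _ = (A ^ (k + 3)).ncard := Nat.card_coe_set_eq _
end

section
/- Let q be a prime power, let c > 1 be a real number, and let P ⊆ F_q^2 with |P| ≥ c·q. Then the number of affine lines in F_q^2 containing at most one point of P is at most q^2·c/(c - 1)^2. -/
open Finset
open scoped Classical

section Incidence

variable {α ι : Type*} [Fintype ι] (L : ι → Set α) (S : Finset α)

lemma sum_card_filter_mem {r : ℕ} (hr : ∀ x ∈ S, #{i | x ∈ L i} = r) :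
    ∑ i, #{x ∈ S | x ∈ L i} = #S * r := by
  have := sum_card_bipartiteAbove_eq_sum_card_bipartiteBelow (s := S) (t := univ)
    (r := fun x i => x ∈ L i)
  simp only [bipartiteAbove, bipartiteBelow] at this
  rw [← this, sum_congr rfl hr, sum_const, smul_eq_mul]

lemma sum_card_offDiag_filter_mem
    (hL : ∀ x ∈ S, ∀ y ∈ S, x ≠ y → ∃! i, x ∈ L i ∧ y ∈ L i) :
    ∑ i, #{x ∈ S | x ∈ L i}.offDiag = #S.offDiag := by
  have hfilter : ∀ i, {x ∈ S | x ∈ L i}.offDiag = {z ∈ S.offDiag | z.1 ∈ L i ∧ z.2 ∈ L i} := by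
    intro i
    ext z
    simp only [mem_offDiag, mem_filter]
    tauto
  have hone : ∀ z ∈ S.offDiag, #{i | z.1 ∈ L i ∧ z.2 ∈ L i} = 1 := by
    intro z hz
    obtain ⟨hx, hy, hxy⟩ := mem_offDiag.mp hz
    simpa [card_eq_one_iff_existsUnique] using hL _ hx _ hy hxy
  have := sum_card_bipartiteAbove_eq_sum_card_bipartiteBelow (s := S.offDiag) (t := univ)
    (r := fun z i => z.1 ∈ L i ∧ z.2 ∈ L i)
  simp only [bipartiteAbove, bipartiteBelow] at this
  simp_rw [hfilter, ← this, sum_congr rfl hone, sum_const, smul_eq_mul, mul_one]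

lemma cast_card_offDiag {R : Type*} [Ring R] {β : Type*} (s : Finset β) :
    (#s.offDiag : R) = #s * #s - #s := by
  rw [offDiag_card, Nat.cast_sub (Nat.le_mul_self _), Nat.cast_mul]

lemma sum_sq_mul_sub_card (q : ℕ) (hι : Fintype.card ι = q ^ 2 + q)
    (hr : ∀ x ∈ S, #{i | x ∈ L i} = q + 1)
    (hL : ∀ x ∈ S, ∀ y ∈ S, x ≠ y → ∃! i, x ∈ L i ∧ y ∈ L i) :
    ∑ i, ((#{x ∈ S | x ∈ L i} : ℝ) * q - #S) ^ 2 = q * #S * (q ^ 2 - #S) := by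
  have h1 : ∑ i, (#{x ∈ S | x ∈ L i} : ℝ) = #S * (q + 1) := by
    exact_mod_cast sum_card_filter_mem L S hr
  have h2 : ∑ i, ((#{x ∈ S | x ∈ L i} : ℝ) * #{x ∈ S | x ∈ L i} - #{x ∈ S | x ∈ L i})
      = #S * #S - #S := by
    simp_rw [← cast_card_offDiag, ← Nat.cast_sum, sum_card_offDiag_filter_mem L S hL]
  have hexpand : ∀ n : ℝ, (n * q - #S) ^ 2
      = q ^ 2 * (n * n - n) + (q ^ 2 - 2 * q * #S) * n + (#S : ℝ) ^ 2 := fun n => by ring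
  simp_rw [hexpand]
  rw [sum_add_distrib, sum_add_distrib, ← mul_sum, ← mul_sum, h1, h2, sum_const, card_univ, hι,
    nsmul_eq_mul]
  push_cast
  ring

lemma card_filter_card_le_one_mul_sq_le (q : ℕ) (hι : Fintype.card ι = q ^ 2 + q)
    (hr : ∀ x ∈ S, #{i | x ∈ L i} = q + 1)
    (hL : ∀ x ∈ S, ∀ y ∈ S, x ≠ y → ∃! i, x ∈ L i ∧ y ∈ L i) (hqS : q ≤ #S) :
    (#{i | #{x ∈ S | x ∈ L i} ≤ 1} : ℝ) * (#S - q) ^ 2 ≤ q * #S * (q ^ 2 - #S) := by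
  rw [← sum_sq_mul_sub_card L S q hι hr hL, ← nsmul_eq_mul]
  calc _ ≤ ∑ i ∈ {i | #{x ∈ S | x ∈ L i} ≤ 1}, ((#{x ∈ S | x ∈ L i} : ℝ) * q - #S) ^ 2 := by
        refine card_nsmul_le_sum _ _ _ fun i hi => ?_
        have hn : (#{x ∈ S | x ∈ L i} : ℝ) ≤ 1 := by exact_mod_cast (mem_filter.mp hi).2
        have hq : (q : ℝ) ≤ #S := by exact_mod_cast hqS
        have hnq : (#{x ∈ S | x ∈ L i} : ℝ) * q ≤ q := by
          simpa using mul_le_mul_of_nonneg_right hn (Nat.cast_nonneg q)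
        nlinarith [Nat.cast_nonneg (α := ℝ) #{x ∈ S | x ∈ L i}]
    _ ≤ _ := sum_le_sum_of_subset_of_nonneg (subset_univ _) fun i _ _ => sq_nonneg _

end Incidence

section PlaneLines

variable {F : Type*} [Field F]

/-- `inl (m, b)` is the line `y = m x + b` and `inr a` is the vertical line `x = a`. -/
def planeLine : (F × F) ⊕ F → Set (F × F)
  | .inl mb => {p | p.2 = mb.1 * p.1 + mb.2}
  | .inr a => {p | p.1 = a}

lemma isAffLine_iff_exists_planeLine {L : Set (F × F)} :
    IsAffLine L ↔ ∃ i, planeLine i = L := by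
  constructor
  · rintro ⟨x, v, hv, rfl⟩
    by_cases hv₁ : v.1 = 0
    · have hv₂ : v.2 ≠ 0 := fun h => hv (Prod.ext hv₁ h)
      refine ⟨.inr x.1, Set.ext fun p => ?_⟩
      simp only [planeLine, Set.mem_ofPred_eq, Prod.ext_iff, Prod.fst_add, Prod.snd_add,
        Prod.smul_fst, Prod.smul_snd, smul_eq_mul, hv₁, mul_zero, add_zero]
      constructor
      · intro hp
        exact ⟨(p.2 - x.2) / v.2, hp, by field_simp; ring⟩
      · rintro ⟨t, hp, -⟩
        exact hp
    · refine ⟨.inl (v.2 / v.1, x.2 - v.2 / v.1 * x.1), Set.ext fun p => ?_⟩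
      simp only [planeLine, Set.mem_ofPred_eq, Prod.ext_iff, Prod.fst_add, Prod.snd_add,
        Prod.smul_fst, Prod.smul_snd, smul_eq_mul]
      constructor
      · intro hp
        refine ⟨(p.1 - x.1) / v.1, by field_simp; ring, ?_⟩
        rw [hp]
        field_simp
        ring
      · rintro ⟨t, h₁, h₂⟩
        rw [h₁, h₂]
        field_simp
        ring
  · rintro ⟨i, rfl⟩
    cases i with
    | inl mb =>
      refine ⟨(0, mb.2), (1, mb.1), by simp [Prod.ext_iff], Set.ext fun p => ?_⟩
      simp only [planeLine, Set.mem_ofPred_eq, Prod.ext_iff, Prod.smul_mk, Prod.mk_add_mk,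
        smul_eq_mul, mul_one, zero_add]
      constructor
      · intro hp
        exact ⟨p.1, rfl, by rw [hp]; ring⟩
      · rintro ⟨t, rfl, h⟩
        rw [h]; ring
    | inr a =>
      refine ⟨(a, 0), (0, 1), by simp [Prod.ext_iff], Set.ext fun p => ?_⟩
      simp only [planeLine, Set.mem_ofPred_eq, Prod.ext_iff, Prod.smul_mk, Prod.mk_add_mk,
        smul_eq_mul, mul_zero, add_zero, mul_one, zero_add]
      exact ⟨fun hp => ⟨p.2, hp, rfl⟩, fun ⟨_, hp, _⟩ => hp⟩

lemma existsUnique_planeLine {x y : F × F} (hxy : x ≠ y) :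
    ∃! i, x ∈ planeLine i ∧ y ∈ planeLine i := by
  by_cases h₁ : x.1 = y.1
  · refine ⟨.inr x.1, ⟨rfl, h₁.symm⟩, ?_⟩
    rintro (mb | a) ⟨hx, hy⟩
    · simp only [planeLine, Set.mem_ofPred_eq] at hx hy
      exact absurd (Prod.ext h₁ (by rw [hx, hy, h₁])) hxy
    · simp only [planeLine, Set.mem_ofPred_eq] at hx
      rw [hx]
  · have hd : x.1 - y.1 ≠ 0 := sub_ne_zero.mpr h₁
    set m := (x.2 - y.2) / (x.1 - y.1)
    refine ⟨.inl (m, x.2 - m * x.1), ⟨by simp [planeLine], ?_⟩, ?_⟩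
    · simp only [planeLine, Set.mem_ofPred_eq, m]
      field_simp
      ring
    · rintro (mb | a) ⟨hx, hy⟩
      · simp only [planeLine, Set.mem_ofPred_eq] at hx hy
        have hm : mb.1 = m := by
          simp only [m]
          field_simp
          rw [hx, hy]; ring
        simp only [Sum.inl.injEq, Prod.ext_iff]
        exact ⟨hm, by rw [← hm, hx]; ring⟩
      · simp only [planeLine, Set.mem_ofPred_eq] at hx hy
        exact absurd (hx.trans hy.symm) h₁

lemma exists_ne_mem_planeLine (i : (F × F) ⊕ F) :
    ∃ x y, x ≠ y ∧ x ∈ planeLine i ∧ y ∈ planeLine i := by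
  cases i with
  | inl mb => exact ⟨(0, mb.2), (1, mb.1 + mb.2), by simp, by simp [planeLine], by simp [planeLine]⟩
  | inr a => exact ⟨(a, 0), (a, 1), by simp, by simp [planeLine], by simp [planeLine]⟩

lemma planeLine_injective : Function.Injective (planeLine (F := F)) := by
  intro i j hij
  obtain ⟨x, y, hxy, hx, hy⟩ := exists_ne_mem_planeLine i
  exact (existsUnique_planeLine hxy).unique ⟨hx, hy⟩ (hij ▸ ⟨hx, hy⟩)

lemma card_filter_mem_planeLine [Fintype F] (x : F × F) :
    #{i | x ∈ planeLine i} = Fintype.card F + 1 := by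
  have hlines : ({i | x ∈ planeLine i} : Finset ((F × F) ⊕ F)) =
      insert (.inr x.1) ((univ : Finset F).image fun m => .inl (m, x.2 - m * x.1)) := by
    ext (mb | a)
    · simp only [mem_filter, mem_insert, mem_image, mem_univ, true_and, reduceCtorEq,
        Sum.inl.injEq, false_or]
      simp only [planeLine, Set.mem_ofPred_eq, Prod.ext_iff]
      constructor
      · intro h
        exact ⟨mb.1, rfl, by rw [h]; ring⟩
      · rintro ⟨m, rfl, h⟩
        rw [← h]
        ring
    · simp [planeLine, eq_comm]
  rw [hlines, card_insert_of_notMem (by simp), card_image_of_injective _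
    (fun a b hab => (Prod.ext_iff.mp (Sum.inl_injective hab)).1), card_univ]

lemma ncard_setOf_isAffLine_and [Fintype F] (p : Set (F × F) → Prop)
    [DecidablePred fun i => p (planeLine i)] :
    {L | IsAffLine L ∧ p L}.ncard = #{i | p (planeLine i)} := by
  have : {L | IsAffLine L ∧ p L} = planeLine '' {i | p (planeLine i)} := by
    ext L
    simp only [Set.mem_ofPred_eq, isAffLine_iff_exists_planeLine, Set.mem_image]
    constructor
    · rintro ⟨⟨i, rfl⟩, hp⟩
      exact ⟨i, hp, rfl⟩
    · rintro ⟨i, hp, rfl⟩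
      exact ⟨⟨i, rfl⟩, hp⟩
  rw [this, Set.ncard_image_of_injective _ planeLine_injective, ← coe_filter_univ,
    Set.ncard_coe_finset]

lemma card_filter_planeLine_le_one_mul_sq_le [Fintype F] (S : Finset (F × F))
    (hS : Fintype.card F ≤ #S) :
    (#{i | #{x ∈ S | x ∈ planeLine i} ≤ 1} : ℝ) * (#S - Fintype.card F) ^ 2 ≤
      Fintype.card F * #S * (Fintype.card F ^ 2 - #S) :=
  card_filter_card_le_one_mul_sq_le planeLine S _
    (by simp [Fintype.card_sum, Fintype.card_prod, sq])
    (fun x _ => card_filter_mem_planeLine x)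
    (fun _ _ _ _ hxy => existsUnique_planeLine hxy) hS

end PlaneLines

lemma le_mul_div_sub_one_sq {q N c K : ℝ} (hq : 0 < q) (hc : 1 < c) (hN : c * q ≤ N)
    (hK : K * (N - q) ^ 2 ≤ q ^ 3 * N) : K ≤ q ^ 2 * c / (c - 1) ^ 2 := by
  have hNq : 0 < N - q := by nlinarith
  -- `N / (N - q)²` decreases in `N > q`, so it is largest at `N = c q`.
  have hmono : q * N * (c - 1) ^ 2 ≤ c * (N - q) ^ 2 := by
    have hd : 0 ≤ N - c * q := by linarith
    nlinarith [mul_nonneg (mul_nonneg hq.le hd) (mul_nonneg (by linarith : (0:ℝ) ≤ c - 1)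
      (by linarith : (0:ℝ) ≤ c + 1)), mul_nonneg (by linarith : (0:ℝ) ≤ c) (sq_nonneg (N - c * q))]
  rw [le_div_iff₀ (by nlinarith)]
  refine le_of_mul_le_mul_right ?_ (pow_pos hNq 2)
  calc K * (c - 1) ^ 2 * (N - q) ^ 2 = K * (N - q) ^ 2 * (c - 1) ^ 2 := by ring
    _ ≤ q ^ 3 * N * (c - 1) ^ 2 := mul_le_mul_of_nonneg_right hK (sq_nonneg _)
    _ = q ^ 2 * (q * N * (c - 1) ^ 2) := by ring
    _ ≤ q ^ 2 * (c * (N - q) ^ 2) := mul_le_mul_of_nonneg_left hmono (sq_nonneg _)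
    _ = q ^ 2 * c * (N - q) ^ 2 := by ring

theorem few_undetermined_lines_general (q : ℕ)
    {F : Type*} [Field F] [Fintype F] (hF : Fintype.card F = q)
    (c : ℝ) (hc : 1 < c) (P : Set (F × F)) (hP : (P.ncard : ℝ) ≥ c * q) :
    (({L : Set (F × F) | IsAffLine L ∧ (P ∩ L).ncard ≤ 1}.ncard : ℝ)) ≤
      (q : ℝ) ^ 2 * c / (c - 1) ^ 2 := by
  subst hF
  obtain ⟨S, rfl⟩ := P.toFinite.exists_finset_coe
  have hinter : ∀ L, ((S : Set (F × F)) ∩ L).ncard = #{x ∈ S | x ∈ L} := fun L => by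
    rw [← Set.ncard_coe_finset, coe_filter]
    rfl
  rw [Set.ncard_coe_finset] at hP
  simp_rw [hinter, ncard_setOf_isAffLine_and]
  have hq : (0 : ℝ) < Fintype.card F := Nat.cast_pos.mpr Fintype.card_pos
  have hqS : Fintype.card F ≤ #S := by exact_mod_cast (by nlinarith : (Fintype.card F : ℝ) ≤ #S)
  refine le_mul_div_sub_one_sq hq hc hP ?_
  calc _ ≤ Fintype.card F * #S * (Fintype.card F ^ 2 - #S : ℝ) :=
        card_filter_planeLine_le_one_mul_sq_le S hqS
    _ ≤ Fintype.card F ^ 3 * #S := by nlinarith [mul_nonneg hq.le (sq_nonneg (#S : ℝ))]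

/-- If `P ⊆ 𝔽_q²` has `|P| ≥ c·q` for some real `c > 1`, then the number of affine
lines containing at most one point of `P` is at most `q²·c/(c-1)²`. -/
theorem few_undetermined_lines (p e q : ℕ) (hp : p.Prime) (he : 0 < e) (hq : q = p ^ e)
    {F : Type*} [Field F] [Fintype F] (hF : Fintype.card F = q)
    (c : ℝ) (hc : 1 < c) (P : Set (F × F)) (hP : (P.ncard : ℝ) ≥ c * q) :
    (({L : Set (F × F) | IsAffLine L ∧ (P ∩ L).ncard ≤ 1}.ncard : ℝ)) ≤
      (q : ℝ) ^ 2 * c / (c - 1) ^ 2 :=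
  few_undetermined_lines_general q hF c hc P hP
end
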